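/- If E‖X‖⁴ < ∞, then the function η(x₁,x₂) = E[d(X,x₁) · d(X,x₂)] satisfies E η(X₁,X₂) = 0 and E[η(X₁,X₂) · η(X₁,X₃)] = 0, for independent X₁, X₂, X₃ with distribution F. -/

import Mathlib

/-!
Write `g`, `Δ`, `d`, `η` of the paper as `meanDist F`, `meanPairDist F`, `doubleCenteredDist F`
and `doubleCenteredDistCov F`; they make sense in any metric space. The double-centred distance
`d` integrates to zero in each argument, hence by Fubini so does `η(x₁, ·)`, since
`∫ η(x₁, x₂) dF(x₂) = ∫ d(y, x₁) (∫ d(y, x₂) dF(x₂)) dF(y)`. By independence both expectations are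
integrals against `F ⊗ F` and `F ⊗ (F ⊗ F)`; integrating out `x₂` (and `x₃`) first makes them
vanish.

Integrability comes from `|d(x, y)| ≤ 2 g(y)` (triangle inequality and `Δ ≤ 2 g(y)`), so that
`|η(x₁, x₂)| ≤ 4 g(x₁) g(x₂)`; the second expectation needs `g ∈ L²`, i.e. a second moment.
-/

open MeasureTheory ProbabilityTheory Function

section Fubini

variable {α β : Type*} [MeasurableSpace α] [MeasurableSpace β] {μ : Measure α} {ν : Measure β}
  [SFinite μ] [SFinite ν]

theorem integral_prod_eq_zero_of_integral_eq_zero {f : α → β → ℝ}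
    (hf : Integrable (uncurry f) (μ.prod ν)) (h : ∀ x, ∫ y, f x y ∂ν = 0) :
    ∫ z, uncurry f z ∂(μ.prod ν) = 0 := by
  simp [integral_prod _ hf, h]

theorem integral_prod_mul_eq_zero_of_integral_eq_zero {f : α → β → ℝ}
    (hf : Integrable (fun z : α × β × β => f z.1 z.2.1 * f z.1 z.2.2) (μ.prod (ν.prod ν)))
    (h : ∀ x, ∫ y, f x y ∂ν = 0) :
    ∫ z : α × β × β, f z.1 z.2.1 * f z.1 z.2.2 ∂(μ.prod (ν.prod ν)) = 0 :=
  integral_prod_eq_zero_of_integral_eq_zero (f := fun x (y : β × β) => f x y.1 * f x y.2) hf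
    fun x => by rw [integral_prod_mul, h, zero_mul]

end Fubini

theorem ProbabilityTheory.iIndepFun.map_prodMk_prodMk_eq_prod {Ω β : Type*} [MeasurableSpace Ω]
    [MeasurableSpace β] {μ : Measure Ω} [IsFiniteMeasure μ] {X₁ X₂ X₃ : Ω → β}
    (hX₁ : Measurable X₁) (hX₂ : Measurable X₂) (hX₃ : Measurable X₃)
    (h : iIndepFun ![X₁, X₂, X₃] μ) :
    μ.map (fun ω => (X₁ ω, X₂ ω, X₃ ω)) = (μ.map X₁).prod ((μ.map X₂).prod (μ.map X₃)) := by
  have hX : ∀ i, Measurable (![X₁, X₂, X₃] i) := by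
    intro i; fin_cases i <;> assumption
  have h₁ : IndepFun X₁ (fun ω => (X₂ ω, X₃ ω)) μ := by
    simpa using (h.indepFun_prodMk hX 1 2 0 (by decide) (by decide)).symm
  have h₂₃ : IndepFun X₂ X₃ μ := by simpa using h.indepFun (show (1 : Fin 3) ≠ 2 by decide)
  rw [h₁.map_prod_eq_prod_map_map hX₁.aemeasurable (hX₂.prodMk hX₃).aemeasurable,
    h₂₃.map_prod_eq_prod_map_map hX₂.aemeasurable hX₃.aemeasurable]

section DoubleCenteredDist

variable {α : Type*} [PseudoMetricSpace α] [MeasurableSpace α]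

noncomputable def meanDist (F : Measure α) (x : α) : ℝ := ∫ y, dist y x ∂F

noncomputable def meanPairDist (F : Measure α) : ℝ := ∫ x, ∫ y, dist x y ∂F ∂F

noncomputable def doubleCenteredDist (F : Measure α) (x y : α) : ℝ :=
  dist x y - meanDist F x - meanDist F y + meanPairDist F

noncomputable def doubleCenteredDistCov (F : Measure α) (x₁ x₂ : α) : ℝ :=
  ∫ y, doubleCenteredDist F y x₁ * doubleCenteredDist F y x₂ ∂F

variable (F : Measure α)

theorem meanDist_nonneg (x : α) : 0 ≤ meanDist F x :=
  integral_nonneg fun _ => dist_nonneg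

theorem meanPairDist_nonneg : 0 ≤ meanPairDist F :=
  integral_nonneg fun _ => integral_nonneg fun _ => dist_nonneg

theorem integral_meanDist : ∫ x, meanDist F x ∂F = meanPairDist F := by
  simp only [meanDist, meanPairDist, dist_comm]

theorem doubleCenteredDist_comm (x y : α) :
    doubleCenteredDist F x y = doubleCenteredDist F y x := by
  simp only [doubleCenteredDist, dist_comm]
  ring

variable [OpensMeasurableSpace α]

section Measurability

variable [SecondCountableTopology α] [SFinite F]

theorem measurable_meanDist : Measurable (meanDist F) :=
  (measurable_snd.dist measurable_fst).stronglyMeasurable.integral_prod_right'.measurable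

theorem measurable_doubleCenteredDist : Measurable (uncurry (doubleCenteredDist F)) :=
  (((measurable_fst.dist measurable_snd).sub ((measurable_meanDist F).comp measurable_fst)).sub
    ((measurable_meanDist F).comp measurable_snd)).add measurable_const

theorem measurable_doubleCenteredDistCov : Measurable (uncurry (doubleCenteredDistCov F)) := by
  have h := measurable_doubleCenteredDist F
  exact ((h.comp (measurable_snd.prodMk (measurable_fst.comp measurable_fst))).mul
    (h.comp (measurable_snd.prodMk (measurable_snd.comp measurable_fst)))).stronglyMeasurable
    |>.integral_prod_right'.measurable

end Measurability

variable {F} [IsProbabilityMeasure F] {x₀ : α}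

theorem integrable_dist_left (hF : Integrable (fun y => dist y x₀) F) (x : α) :
    Integrable (fun y => dist y x) F :=
  (hF.add (integrable_const (dist x₀ x))).mono'
    (continuous_id.dist continuous_const).aestronglyMeasurable
    (ae_of_all _ fun y => by
      rw [Real.norm_of_nonneg dist_nonneg]
      exact dist_triangle y x₀ x)

theorem meanDist_le_add_dist (hF : Integrable (fun y => dist y x₀) F) (x y : α) :
    meanDist F x ≤ meanDist F y + dist x y :=
  calc ∫ z, dist z x ∂F ≤ ∫ z, (dist z y + dist y x) ∂F :=
        integral_mono (integrable_dist_left hF x)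
          ((integrable_dist_left hF y).add (integrable_const _)) fun z => dist_triangle z y x
    _ = meanDist F y + dist x y := by
        rw [integral_add (integrable_dist_left hF y) (integrable_const _), integral_const]
        simp [meanDist, dist_comm]

theorem abs_dist_sub_meanDist_le (hF : Integrable (fun y => dist y x₀) F) (x y : α) :
    |dist x y - meanDist F x| ≤ meanDist F y := by
  have h : dist x y - meanDist F x = ∫ z, (dist y x - dist z x) ∂F := by
    rw [integral_sub (integrable_const _) (integrable_dist_left hF x), integral_const]
    simp [meanDist, dist_comm]
  rw [h]
  exact abs_integral_le_integral_abs.trans <|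
    integral_mono ((integrable_const _).sub (integrable_dist_left hF x)).abs
      (integrable_dist_left hF y) fun z => (abs_dist_sub_le y z x).trans_eq (dist_comm y z)

variable [SecondCountableTopology α]

theorem memLp_meanDist {p : ENNReal} (hp : 1 ≤ p)
    (hF : MemLp (fun y => dist y x₀) p F) : MemLp (meanDist F) p F :=
  ((memLp_const (meanDist F x₀)).add hF).of_le (measurable_meanDist F).aestronglyMeasurable
    (ae_of_all _ fun x => by
      rw [Real.norm_of_nonneg (meanDist_nonneg F x), Pi.add_apply,
        Real.norm_of_nonneg (add_nonneg (meanDist_nonneg F x₀) dist_nonneg)]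
      exact meanDist_le_add_dist (hF.integrable hp) x x₀)

theorem integrable_meanDist (hF : Integrable (fun y => dist y x₀) F) :
    Integrable (meanDist F) F :=
  memLp_one_iff_integrable.1 (memLp_meanDist le_rfl (memLp_one_iff_integrable.2 hF))

theorem meanPairDist_le_two_mul (hF : Integrable (fun y => dist y x₀) F) (y : α) :
    meanPairDist F ≤ 2 * meanDist F y := by
  rw [← integral_meanDist]
  calc ∫ x, meanDist F x ∂F ≤ ∫ x, (meanDist F y + dist x y) ∂F :=
        integral_mono (integrable_meanDist hF)
          ((integrable_const _).add (integrable_dist_left hF y))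
          fun x => meanDist_le_add_dist hF x y
    _ = 2 * meanDist F y := by
        rw [integral_add (integrable_const _) (integrable_dist_left hF y), integral_const]
        simp [meanDist]
        ring

theorem abs_doubleCenteredDist_le (hF : Integrable (fun y => dist y x₀) F) (x y : α) :
    |doubleCenteredDist F x y| ≤ 2 * meanDist F y := by
  have h₁ := abs_le.1 (abs_dist_sub_meanDist_le hF x y)
  have h₂ := meanPairDist_le_two_mul hF y
  have h₃ := meanPairDist_nonneg F
  rw [doubleCenteredDist, abs_le]
  constructor <;> linarith

theorem integral_doubleCenteredDist_left (hF : Integrable (fun y => dist y x₀) F) (y : α) :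
    ∫ x, doubleCenteredDist F x y ∂F = 0 := by
  have h₁ : Integrable (fun x => dist x y - meanDist F x) F :=
    (integrable_dist_left hF y).sub (integrable_meanDist hF)
  have h₂ : Integrable (fun x => dist x y - meanDist F x - meanDist F y) F :=
    h₁.sub (integrable_const _)
  simp only [doubleCenteredDist]
  rw [integral_add h₂ (integrable_const _), integral_sub h₁ (integrable_const _),
    integral_sub (integrable_dist_left hF y) (integrable_meanDist hF), integral_meanDist]
  simp [meanDist]

theorem integral_doubleCenteredDist_right (hF : Integrable (fun y => dist y x₀) F) (x : α) :
    ∫ y, doubleCenteredDist F x y ∂F = 0 := by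
  simp_rw [doubleCenteredDist_comm F x]
  exact integral_doubleCenteredDist_left hF x

theorem norm_doubleCenteredDist_mul_le (hF : Integrable (fun y => dist y x₀) F) (y x₁ x₂ : α) :
    ‖doubleCenteredDist F y x₁ * doubleCenteredDist F y x₂‖
      ≤ 2 * meanDist F x₁ * (2 * meanDist F x₂) := by
  rw [norm_mul, Real.norm_eq_abs, Real.norm_eq_abs]
  exact mul_le_mul (abs_doubleCenteredDist_le hF y x₁) (abs_doubleCenteredDist_le hF y x₂)
    (abs_nonneg _) (mul_nonneg zero_le_two (meanDist_nonneg F x₁))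

theorem abs_doubleCenteredDistCov_le (hF : Integrable (fun y => dist y x₀) F) (x₁ x₂ : α) :
    |doubleCenteredDistCov F x₁ x₂| ≤ 2 * meanDist F x₁ * (2 * meanDist F x₂) := by
  simpa [doubleCenteredDistCov] using norm_integral_le_of_norm_le_const
    (ae_of_all F fun y => norm_doubleCenteredDist_mul_le hF y x₁ x₂)

theorem integral_doubleCenteredDistCov_right (hF : Integrable (fun y => dist y x₀) F) (x₁ : α) :
    ∫ x₂, doubleCenteredDistCov F x₁ x₂ ∂F = 0 := by
  have hd := measurable_doubleCenteredDist F
  have hint : Integrable (uncurry fun x₂ y => doubleCenteredDist F y x₁ * doubleCenteredDist F y x₂)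
      (F.prod F) :=
    (((integrable_meanDist hF).const_mul (2 * meanDist F x₁ * 2)).comp_fst F).mono'
      ((hd.comp (measurable_snd.prodMk measurable_const)).mul
        (hd.comp (measurable_snd.prodMk measurable_fst))).aestronglyMeasurable
      (ae_of_all _ fun q => (norm_doubleCenteredDist_mul_le hF q.2 x₁ q.1).trans_eq (by ring))
  calc ∫ x₂, doubleCenteredDistCov F x₁ x₂ ∂F
      = ∫ y, ∫ x₂, doubleCenteredDist F y x₁ * doubleCenteredDist F y x₂ ∂F ∂F :=
        integral_integral_swap hint
    _ = 0 := by simp [integral_const_mul, integral_doubleCenteredDist_right hF]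

theorem integrable_doubleCenteredDistCov (hF : Integrable (fun y => dist y x₀) F) :
    Integrable (uncurry (doubleCenteredDistCov F)) (F.prod F) :=
  (((integrable_meanDist hF).const_mul 2).mul_prod ((integrable_meanDist hF).const_mul 2)).mono'
    (measurable_doubleCenteredDistCov F).aestronglyMeasurable
    (ae_of_all _ fun q => abs_doubleCenteredDistCov_le hF q.1 q.2)

theorem integrable_doubleCenteredDistCov_mul (hF : MemLp (fun y => dist y x₀) 2 F) :
    Integrable (fun z : α × α × α =>
      doubleCenteredDistCov F z.1 z.2.1 * doubleCenteredDistCov F z.1 z.2.2)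
      (F.prod (F.prod F)) := by
  have hF₁ := hF.integrable one_le_two
  have hη := measurable_doubleCenteredDistCov F
  refine ((((memLp_meanDist one_le_two hF).integrable_sq.const_mul 16).mul_prod
    ((integrable_meanDist hF₁).mul_prod (integrable_meanDist hF₁)))).mono'
    ((hη.comp (measurable_fst.prodMk (measurable_fst.comp measurable_snd))).mul
      (hη.comp (measurable_fst.prodMk (measurable_snd.comp measurable_snd)))).aestronglyMeasurable
    (ae_of_all _ fun z => ?_)
  rw [norm_mul, Real.norm_eq_abs, Real.norm_eq_abs]
  calc |doubleCenteredDistCov F z.1 z.2.1| * |doubleCenteredDistCov F z.1 z.2.2|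
      ≤ 2 * meanDist F z.1 * (2 * meanDist F z.2.1)
          * (2 * meanDist F z.1 * (2 * meanDist F z.2.2)) :=
        mul_le_mul (abs_doubleCenteredDistCov_le hF₁ _ _) (abs_doubleCenteredDistCov_le hF₁ _ _)
          (abs_nonneg _)
          (mul_nonneg (mul_nonneg zero_le_two (meanDist_nonneg F _))
            (mul_nonneg zero_le_two (meanDist_nonneg F _)))
    _ = 16 * meanDist F z.1 ^ 2 * (meanDist F z.2.1 * meanDist F z.2.2) := by ring

end DoubleCenteredDist

/-- If `E‖X‖⁴ < ∞`, then `η(x₁,x₂) = E[d(X,x₁) · d(X,x₂)]` satisfies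
`E η(X₁,X₂) = 0` and `E[η(X₁,X₂) · η(X₁,X₃)] = 0` for independent `X₁, X₂, X₃ ~ F`. -/
theorem gini_eta_orthogonal
    {Ω : Type*} [MeasurableSpace Ω] (μ : Measure Ω) [IsProbabilityMeasure μ]
    (p : ℕ) (F : Measure (EuclideanSpace ℝ (Fin p))) [IsProbabilityMeasure F]
    (X₁ X₂ X₃ : Ω → EuclideanSpace ℝ (Fin p))
    (hX₁ : Measurable X₁) (hX₂ : Measurable X₂) (hX₃ : Measurable X₃)
    (hX₁F : μ.map X₁ = F) (hX₂F : μ.map X₂ = F) (hX₃F : μ.map X₃ = F)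
    (hindep : iIndepFun ![X₁, X₂, X₃] μ)
    (hmom : Integrable (fun x => ‖x‖ ^ 4) F)
    (Δ : ℝ) (hΔ : Δ = ∫ x, ∫ y, ‖x - y‖ ∂F ∂F)
    (g : EuclideanSpace ℝ (Fin p) → ℝ) (hg : ∀ x, g x = ∫ y, ‖y - x‖ ∂F)
    (d : EuclideanSpace ℝ (Fin p) → EuclideanSpace ℝ (Fin p) → ℝ)
    (hd : ∀ x₁ x₂, d x₁ x₂ = ‖x₁ - x₂‖ - g x₁ - g x₂ + Δ)
    (η : EuclideanSpace ℝ (Fin p) → EuclideanSpace ℝ (Fin p) → ℝ)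
    (hη : ∀ x₁ x₂, η x₁ x₂ = ∫ y, d y x₁ * d y x₂ ∂F) :
    (∫ ω, η (X₁ ω) (X₂ ω) ∂μ = 0)
    ∧ (∫ ω, η (X₁ ω) (X₂ ω) * η (X₁ ω) (X₃ ω) ∂μ = 0) := by
  obtain rfl : g = meanDist F := funext fun x => by simp [hg, meanDist, dist_eq_norm]
  obtain rfl : Δ = meanPairDist F := by simp [hΔ, meanPairDist, dist_eq_norm]
  obtain rfl : d = doubleCenteredDist F := by
    funext x y; rw [hd, doubleCenteredDist, dist_eq_norm]
  obtain rfl : η = doubleCenteredDistCov F := by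
    funext x y; rw [hη, doubleCenteredDistCov]
  have hF₂ : MemLp (fun x => dist x 0) 2 F := by
    have hsq : Integrable (fun x => ‖x‖ ^ 2) F :=
      ((memLp_two_iff_integrable_sq (by fun_prop)).2 (by simpa [← pow_mul] using hmom)).integrable
        one_le_two
    exact (memLp_two_iff_integrable_sq (by fun_prop)).2 (by simpa using hsq)
  have hF₁ := hF₂.integrable one_le_two
  have hcov := integral_doubleCenteredDistCov_right hF₁
  have h₁₂ : IndepFun X₁ X₂ μ := by simpa using hindep.indepFun (show (0 : Fin 3) ≠ 1 by decide)
  have hpair : μ.map (fun ω => (X₁ ω, X₂ ω)) = F.prod F := by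
    rw [h₁₂.map_prod_eq_prod_map_map hX₁.aemeasurable hX₂.aemeasurable, hX₁F, hX₂F]
  have htriple : μ.map (fun ω => (X₁ ω, X₂ ω, X₃ ω)) = F.prod (F.prod F) := by
    rw [hindep.map_prodMk_prodMk_eq_prod hX₁ hX₂ hX₃, hX₁F, hX₂F, hX₃F]
  constructor
  · have hint := integrable_doubleCenteredDistCov hF₁
    have h := integral_map (hX₁.prodMk hX₂).aemeasurable (hpair ▸ hint.aestronglyMeasurable)
    rw [hpair] at h
    exact h.symm.trans (integral_prod_eq_zero_of_integral_eq_zero hint hcov)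
  · have hint := integrable_doubleCenteredDistCov_mul hF₂
    have h := integral_map (hX₁.prodMk (hX₂.prodMk hX₃)).aemeasurable
      (htriple ▸ hint.aestronglyMeasurable)
    rw [htriple] at h
    exact h.symm.trans (integral_prod_mul_eq_zero_of_integral_eq_zero hint hcov)
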